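/- arXiv:1501.06804 — 5 statements merged into one kernel-verified Lean document; each statement's English description precedes it below -/
import Mathlib

section
/- Let q be a prime power, r ≥ 1 and 1 ≤ k ≤ q^r integers, α_1, …, α_k ∈ F_q^*, and N_1, …, N_k be k distinct integers in {0, …, q^r − 1} with base-q expansions N_i = Σ_{j=0}^{r−1} n_{i,j} q^j. Then there exist β_1, …, β_r ∈ F_q such that Σ_{i=1}^k α_i ∏_{j=0}^{r−1} β_{j+1}^{n_{i,j}} ≠ 0, with the convention 0^0 = 1. -/
/-!
Encode each `N i` as the monomial whose exponent in `X j` is the `j`-th base-`q` digit of `N i`.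
Distinct integers give distinct monomials, so `∑ i, α i • X^{digits (N i)}` is a nonzero polynomial
whose degree in every variable is at most `q - 1`. Over `𝔽_q` such a polynomial cannot vanish at
every point of `𝔽_q^r`, and its value at `β` is exactly the sum in the statement.
-/

open MvPolynomial

theorem Nat.eq_of_div_pow_mod_eq {q r a b : ℕ} (ha : a < q ^ r) (hb : b < q ^ r)
    (h : ∀ j < r, a / q ^ j % q = b / q ^ j % q) : a = b := by
  induction r generalizing a b with
  | zero => simp only [pow_zero, Nat.lt_one_iff] at ha hb; omega
  | succ r ih =>
    have hq : 0 < q := Nat.pos_of_ne_zero fun h0 => by simp [h0] at ha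
    have hmod : a % q = b % q := by simpa using h 0 r.succ_pos
    have hdiv : a / q = b / q := by
      refine ih ?_ ?_ fun j hj => ?_
      · rwa [Nat.div_lt_iff_lt_mul hq, ← pow_succ]
      · rwa [Nat.div_lt_iff_lt_mul hq, ← pow_succ]
      · simpa only [Nat.div_div_eq_div_mul, ← pow_succ'] using h (j + 1) (by omega)
    rw [← Nat.div_add_mod a q, ← Nat.div_add_mod b q, hdiv, hmod]

noncomputable def digitExponents (q r N : ℕ) : Fin r →₀ ℕ :=
  Finsupp.equivFunOnFinite.symm fun j => N / q ^ (j : ℕ) % q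

@[simp]
theorem digitExponents_apply (q r N : ℕ) (j : Fin r) :
    digitExponents q r N j = N / q ^ (j : ℕ) % q := rfl

theorem digitExponents_le {q : ℕ} (hq : 0 < q) (r N : ℕ) (j : Fin r) :
    digitExponents q r N j ≤ q - 1 := by
  have := Nat.mod_lt (N / q ^ (j : ℕ)) hq
  rw [digitExponents_apply]
  omega

theorem digitExponents_injOn (q r : ℕ) : Set.InjOn (digitExponents q r) (Set.Iio (q ^ r)) :=
  fun _ ha _ hb hab => Nat.eq_of_div_pow_mod_eq ha hb fun j hj => DFunLike.congr_fun hab ⟨j, hj⟩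

theorem eval_monomial_digitExponents {R : Type*} [CommSemiring R] (q r N : ℕ) (β : Fin r → R)
    (c : R) : eval β (monomial (digitExponents q r N) c) = c * ∏ j, β j ^ (N / q ^ (j : ℕ) % q) := by
  rw [eval_monomial, Finsupp.prod_pow]
  rfl

universe u

namespace MvPolynomial

theorem exists_eval_ne_zero_of_mem_restrictDegree {σ K : Type u} [Field K] [Fintype K] [Finite σ]
    {p : MvPolynomial σ K} (hp : p ∈ restrictDegree σ K (Fintype.card K - 1)) (hp0 : p ≠ 0) :
    ∃ v : σ → K, eval v p ≠ 0 := by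
  by_contra! h
  exact hp0 (eq_zero_of_eval_eq_zero σ K p h hp)

variable {R σ ι : Type*} [CommSemiring R] [Fintype ι]

theorem coeff_sum_monomial_of_injective {d : ι → σ →₀ ℕ} (hd : d.Injective)
    (c : ι → R) (i : ι) : coeff (d i) (∑ i', monomial (d i') (c i')) = c i := by
  classical
  rw [coeff_sum, Finset.sum_eq_single i (fun i' _ hi' => ?_) (by simp)]
  · simp
  · rw [coeff_monomial, if_neg (hd.ne hi')]

theorem sum_monomial_ne_zero {d : ι → σ →₀ ℕ} (hd : d.Injective) {c : ι → R} (hc : ∀ i, c i ≠ 0)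
    (i : ι) : ∑ i', monomial (d i') (c i') ≠ 0 := by
  intro h
  apply hc i
  rw [← coeff_sum_monomial_of_injective hd c i, h, coeff_zero]

theorem sum_monomial_mem_restrictDegree {d : ι → σ →₀ ℕ} {n : ℕ} (hd : ∀ i s, d i s ≤ n)
    (c : ι → R) : ∑ i, monomial (d i) (c i) ∈ restrictDegree σ R n :=
  Submodule.sum_mem _ fun i _ => (monomial_mem_restrictSupport R).2 (Or.inl (hd i))

end MvPolynomial

theorem stmt_0_general (Fq : Type) [Field Fq] [Fintype Fq] (q : ℕ) (hq : Fintype.card Fq = q)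
    (r k : ℕ) (hk : 1 ≤ k)
    (α : Fin k → Fqˣ) (N : Fin k → ℕ) (hNinj : Function.Injective N)
    (hNlt : ∀ i, N i < q ^ r) :
    ∃ β : Fin r → Fq,
      ∑ i : Fin k, (α i : Fq) * ∏ j : Fin r, (β j) ^ ((N i / q ^ (j : ℕ)) % q) ≠ 0 := by
  subst hq
  have hinj : (digitExponents (Fintype.card Fq) r ∘ N).Injective := fun i i' h =>
    hNinj (digitExponents_injOn _ r (hNlt i) (hNlt i') h)
  have hdeg := sum_monomial_mem_restrictDegree
    (fun i => digitExponents_le (Fintype.card_pos (α := Fq)) r (N i)) (fun i => (α i : Fq))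
  obtain ⟨β, hβ⟩ := exists_eval_ne_zero_of_mem_restrictDegree hdeg
    (sum_monomial_ne_zero hinj (fun i => (α i).ne_zero) ⟨0, hk⟩)
  refine ⟨β, ?_⟩
  simpa only [map_sum, eval_monomial_digitExponents] using hβ

/-- Let `Fq` be a finite field with `q` elements, `r ≥ 1`,
`1 ≤ k ≤ q^r`, `α : Fin k → Fqˣ`, and `N : Fin k → ℕ` injective with values in
`{0, …, q^r − 1}`, with base-`q` digits `n_{i,j} = (N i / q^j) % q`.  Then there
exist `β_1, …, β_r ∈ Fq` such that `∑ i, α i * ∏ j, (β j)^(n_{i,j}) ≠ 0`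
(with the convention `0^0 = 1`, as in Lean). -/
theorem stmt_0 (Fq : Type) [Field Fq] [Fintype Fq] (q : ℕ) (hq : Fintype.card Fq = q)
    (r k : ℕ) (hr : 1 ≤ r) (hk : 1 ≤ k) (hkq : k ≤ q ^ r)
    (α : Fin k → Fqˣ) (N : Fin k → ℕ) (hNinj : Function.Injective N)
    (hNlt : ∀ i, N i < q ^ r) :
    ∃ β : Fin r → Fq,
      ∑ i : Fin k, (α i : Fq) * ∏ j : Fin r, (β j) ^ ((N i / q ^ (j : ℕ)) % q) ≠ 0 :=
  stmt_0_general Fq q hq r k hk α N hNinj hNlt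
end

section
/- Let A = F_q[θ]. Let x ∈ A be such that for infinitely many monic irreducible polynomials P of A, x^{q^d} ≡ x (mod P^p), where d = deg P and p is the characteristic. Then x ∈ A^p, i.e., x is a p-th power in A. -/
/-!
Differentiating `P ^ p ∣ x ^ (q ^ d) - x` kills `x ^ (q ^ d)` (its exponent vanishes in
characteristic `p`) and leaves `P ^ (p - 1) ∣ x'`. If `x' ≠ 0`, only finitely many monic `P`
divide it, so `x' = 0`; over the perfect field `F_q` this makes `x` a `p`-th power.
-/

open Polynomial

namespace Polynomial

theorem exists_eq_pow_of_derivative_eq_zero {R : Type*} [CommRing R] [IsDomain R] (p : ℕ)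
    [Fact p.Prime] [CharP R p] [PerfectRing R p] {f : R[X]} (hf : derivative f = 0) :
    ∃ g : R[X], f = g ^ p :=
  ⟨(contract p f).map (frobeniusEquiv R p).symm, by
    rw [← polynomial_expand_eq, expand_contract p hf (Fact.out : p.Prime).ne_zero]⟩

theorem derivative_pow_eq_zero_of_cast_eq_zero {R : Type*} [CommSemiring R] (f : R[X]) {m : ℕ}
    (hm : (m : R) = 0) : derivative (f ^ m) = 0 := by
  rw [derivative_pow, hm, map_zero, zero_mul, zero_mul]

theorem dvd_derivative_of_pow_dvd_sub {R : Type*} [CommRing R] {P f g : R[X]} {k : ℕ}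
    (hk : 2 ≤ k) (hg : derivative g = 0) (hdvd : P ^ k ∣ g - f) : P ∣ derivative f := by
  have h := pow_sub_one_dvd_derivative_of_pow_dvd hdvd
  rw [derivative_sub, hg, zero_sub, dvd_neg] at h
  exact (dvd_pow_self P (by omega)).trans h

theorem finite_setOf_monic_dvd {R : Type*} [CommRing R] [IsDomain R] [UniqueFactorizationMonoid R]
    {f : R[X]} (hf : f ≠ 0) : {g : R[X] | g.Monic ∧ g ∣ f}.Finite :=
  Set.finite_coe_iff.mp <| @Finite.of_fintype _ (fintypeSubtypeMonicDvd f hf)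

end Polynomial

/-- Let `A = Fq[θ]` with `Fq` a finite field of cardinality `q` and
characteristic `p`.  If `x ∈ A` satisfies `x^(q^d) ≡ x (mod P^p)` for infinitely many
monic irreducible polynomials `P` of `A` (where `d = deg P`), then `x` is a `p`-th
power in `A`. -/
theorem stmt_2 (Fq : Type) [Field Fq] [Fintype Fq] (p : ℕ) [Fact p.Prime] [CharP Fq p]
    (x : Polynomial Fq)
    (h : {P : Polynomial Fq | P.Monic ∧ Irreducible P ∧
        P ^ p ∣ x ^ (Fintype.card Fq ^ P.natDegree) - x}.Infinite) :
    ∃ y : Polynomial Fq, x = y ^ p := by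
  apply exists_eq_pow_of_derivative_eq_zero p
  by_contra hx
  refine h ((finite_setOf_monic_dvd hx).subset ?_)
  rintro P ⟨hmonic, hirr, hdvd⟩
  have hq : ((Fintype.card Fq ^ P.natDegree : ℕ) : Fq) = 0 := by
    rw [Nat.cast_pow, FiniteField.cast_card_eq_zero, zero_pow hirr.natDegree_pos.ne']
  exact ⟨hmonic, dvd_derivative_of_pow_dvd_sub (Fact.out : p.Prime).two_le
    (derivative_pow_eq_zero_of_cast_eq_zero x hq) hdvd⟩
end

section
/- Let A = F_q[θ] and let F ∈ A with F' ≠ 0 (derivative with respect to θ). Then for every monic irreducible P of degree d not dividing F', the P-adic valuation of F^{q^d} − F is exactly 1. -/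
open Polynomial

/-- Let `A = Fq[θ]` and `F ∈ A` with `F' ≠ 0`.  Then for every monic
irreducible `P` of degree `d` not dividing `F'`, the `P`-adic valuation of
`F^(q^d) − F` is exactly `1`, i.e. `P` divides it but `P^2` does not. -/
theorem stmt_3 (Fq : Type) [Field Fq] [Fintype Fq] (F : Polynomial Fq)
    (hF : Polynomial.derivative F ≠ 0)
    (P : Polynomial Fq) (hmon : P.Monic) (hirr : Irreducible P)
    (hnd : ¬ P ∣ Polynomial.derivative F) :
    P ∣ F ^ (Fintype.card Fq ^ P.natDegree) - F ∧
      ¬ P ^ 2 ∣ F ^ (Fintype.card Fq ^ P.natDegree) - F := by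
  have hP0 : P ≠ 0 := hirr.ne_zero
  constructor
  · have : Fact (Irreducible P) := ⟨hirr⟩
    have pb := AdjoinRoot.powerBasis hP0
    have hfd : FiniteDimensional Fq (AdjoinRoot P) := pb.finite
    have hfin : Finite (AdjoinRoot P) := Module.finite_of_finite Fq
    have : Fintype (AdjoinRoot P) := Fintype.ofFinite _
    have hcard : Fintype.card (AdjoinRoot P) = Fintype.card Fq ^ P.natDegree := by
      rw [Module.card_eq_pow_finrank (K := Fq) (V := AdjoinRoot P), (AdjoinRoot.powerBasis hP0).finrank,
        AdjoinRoot.powerBasis_dim]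
    rw [← AdjoinRoot.mk_eq_zero, map_sub, map_pow, ← hcard, FiniteField.pow_card, sub_self]
  · intro h
    apply hnd
    have hdvd : P ∣ derivative (F ^ (Fintype.card Fq ^ P.natDegree) - F) := by
      obtain ⟨Q, hQ⟩ := h
      exact hQ ▸ ⟨C 2 * derivative P * Q + P * derivative Q, by
        rw [derivative_mul, derivative_sq]; ring⟩
    have hcast : ((Fintype.card Fq ^ P.natDegree : ℕ) : Fq) = 0 := by
      push_cast
      rw [FiniteField.cast_card_eq_zero]
      exact zero_pow (by
        have := hirr.natDegree_pos
        omega)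
    rw [derivative_sub, derivative_pow, hcast, map_zero, zero_mul, zero_mul,
      zero_sub, dvd_neg] at hdvd
    exact hdvd
end

section
/- Let A = F_q[θ], with F_q of characteristic p. Fix an integer j ≥ 0. Then for all d > (q^j − 1)/(q − 1), the power sum Σ_{a ∈ A_{+,d}} a^{q^j − 1} over monic polynomials a of degree d vanishes. Moreover Σ_{d ≥ 0} Σ_{a ∈ A_{+,d}} a^{q^j−1} = 0 for j > 0, and equals 1 for j = 0. -/
/-- The monic polynomial of degree `d` over `Fq` with lower-order coefficients
given by `c : Fin d → Fq`. -/
noncomputable def monicOf (Fq : Type) [Field Fq] (d : ℕ) (c : Fin d → Fq) : Polynomial Fq :=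
  Polynomial.X ^ d + ∑ i : Fin d, Polynomial.C (c i) * Polynomial.X ^ (i : ℕ)

/-- The power sum `∑_{a ∈ A_{+,d}} a^(q^j − 1)` over all monic polynomials of
degree `d` in `A = Fq[θ]`. -/
noncomputable def powerSum (Fq : Type) [Field Fq] [Fintype Fq] (j d : ℕ) : Polynomial Fq :=
  ∑ c : Fin d → Fq, (monicOf Fq d c) ^ (Fintype.card Fq ^ j - 1)

open Finset Polynomial in
lemma core_sum_zero (Fq : Type) [Field Fq] [Fintype Fq] (n k : ℕ)
    (hk : k < n * (Fintype.card Fq - 1)) (g : Polynomial Fq) (r : Fin n → Polynomial Fq) :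
    ∑ c : Fin n → Fq, (g + ∑ i : Fin n, Polynomial.C (c i) * r i) ^ k = 0 := by
  classical
  set B : MvPolynomial (Fin n) (Polynomial Fq) :=
    MvPolynomial.C g + ∑ i : Fin n, MvPolynomial.X i * MvPolynomial.C (r i) with hB
  have hBdeg : B.totalDegree ≤ 1 := by
    refine (MvPolynomial.totalDegree_add _ _).trans (max_le ?_ ?_)
    · simp [MvPolynomial.totalDegree_C]
    · refine (MvPolynomial.totalDegree_finset_sum _ _).trans (Finset.sup_le fun i _ => ?_)
      refine (MvPolynomial.totalDegree_mul _ _).trans ?_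
      simp [MvPolynomial.totalDegree_X, MvPolynomial.totalDegree_C]
  set Q := B ^ k with hQ
  have hQdeg : Q.totalDegree ≤ k := by
    refine (MvPolynomial.totalDegree_pow _ _).trans ?_
    calc k * B.totalDegree ≤ k * 1 := Nat.mul_le_mul_left k hBdeg
      _ = k := mul_one k
  have heval : ∀ c : Fin n → Fq,
      (g + ∑ i : Fin n, Polynomial.C (c i) * r i) ^ k
        = MvPolynomial.eval (fun i => Polynomial.C (c i)) Q := by
    intro c
    simp [hQ, hB, map_pow, map_add, map_sum, map_mul]
  calc ∑ c : Fin n → Fq, (g + ∑ i : Fin n, Polynomial.C (c i) * r i) ^ k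
      = ∑ c : Fin n → Fq, ∑ m ∈ Q.support, Q.coeff m * ∏ i, Polynomial.C (c i) ^ m i := by
        simp_rw [heval, MvPolynomial.eval_eq']
    _ = ∑ m ∈ Q.support, ∑ c : Fin n → Fq, Q.coeff m * ∏ i, Polynomial.C (c i) ^ m i :=
        Finset.sum_comm
    _ = 0 := by
        refine Finset.sum_eq_zero fun m hm => ?_
        rw [← Finset.mul_sum]
        have h1 : ∑ c : Fin n → Fq, ∏ i, Polynomial.C (c i) ^ m i
            = Polynomial.C (∏ i, ∑ t : Fq, t ^ m i) := by
          have h2 : ∀ c : Fin n → Fq,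
              ∏ i, Polynomial.C (c i) ^ m i = Polynomial.C (∏ i, (c i) ^ m i) := by
            intro c; rw [map_prod]; simp [map_pow]
          simp_rw [h2]
          rw [← map_sum, Fintype.prod_sum (fun i (t : Fq) => t ^ m i)]
        have hsum : ∑ i : Fin n, m i ≤ k := by
          have h3 := MvPolynomial.le_totalDegree hm
          have h4 : (m.sum fun _ e => e) = ∑ i : Fin n, m i :=
            Finsupp.sum_fintype _ _ (fun _ => rfl)
          omega
        have hex : ∃ i : Fin n, m i < Fintype.card Fq - 1 := by
          by_contra h
          push_neg at h
          have : n * (Fintype.card Fq - 1) ≤ ∑ i : Fin n, m i := by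
            calc n * (Fintype.card Fq - 1) = ∑ _i : Fin n, (Fintype.card Fq - 1) := by
                  simp [Finset.sum_const, mul_comm]
              _ ≤ ∑ i : Fin n, m i := Finset.sum_le_sum fun i _ => h i
          omega
        obtain ⟨i₀, hi₀⟩ := hex
        have hz : ∏ i : Fin n, ∑ t : Fq, t ^ m i = 0 :=
          Finset.prod_eq_zero (Finset.mem_univ i₀)
            (FiniteField.sum_pow_lt_card_sub_one (K := Fq) (m i₀) hi₀)
        rw [h1, hz, map_zero, mul_zero]

open Finset Polynomial in
lemma step_lemma (Fq : Type) [Field Fq] [Fintype Fq] (k n : ℕ)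
    (hk1 : ∀ t : Fq, t ≠ 0 → t ^ k = 1) :
    ∑ c : Fin (n + 1) → Fq, (∑ i : Fin (n + 1), Polynomial.C (c i) * Polynomial.X ^ (i : ℕ)) ^ k
      = (∑ c : Fin n → Fq, (∑ i : Fin n, Polynomial.C (c i) * Polynomial.X ^ (i : ℕ)) ^ k)
        - ∑ c : Fin n → Fq, (monicOf Fq n c) ^ k := by
  classical
  have hsnoc : ∑ c : Fin (n + 1) → Fq,
      (∑ i : Fin (n + 1), Polynomial.C (c i) * Polynomial.X ^ (i : ℕ)) ^ k
      = ∑ p : Fq × (Fin n → Fq),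
        ((∑ i : Fin n, Polynomial.C (p.2 i) * Polynomial.X ^ (i : ℕ))
          + Polynomial.C p.1 * Polynomial.X ^ n) ^ k := by
    rw [← Equiv.sum_comp (Fin.snocEquiv fun _ => Fq)]
    refine Finset.sum_congr rfl fun p _ => ?_
    congr 1
    rw [Fin.sum_univ_castSucc]
    simp [Fin.snocEquiv, Fin.snoc_castSucc, Fin.snoc_last]
  rw [hsnoc, Fintype.sum_prod_type]
  rw [← Finset.add_sum_erase _ _ (Finset.mem_univ (0 : Fq))]
  have h0 : ∑ c : Fin n → Fq,
      ((∑ i : Fin n, Polynomial.C (c i) * Polynomial.X ^ (i : ℕ))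
        + Polynomial.C (0:Fq) * Polynomial.X ^ n) ^ k
      = ∑ c : Fin n → Fq, (∑ i : Fin n, Polynomial.C (c i) * Polynomial.X ^ (i : ℕ)) ^ k := by
    simp
  have ht : ∀ t : Fq, t ≠ 0 → ∑ c : Fin n → Fq,
      ((∑ i : Fin n, Polynomial.C (c i) * Polynomial.X ^ (i : ℕ))
        + Polynomial.C t * Polynomial.X ^ n) ^ k
      = ∑ c : Fin n → Fq, (monicOf Fq n c) ^ k := by
    intro t htz
    rw [← Equiv.sum_comp (Equiv.piCongrRight fun _ : Fin n => Equiv.mulLeft₀ t htz)]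
    refine Finset.sum_congr rfl fun c _ => ?_
    have : (∑ i : Fin n,
          Polynomial.C ((Equiv.piCongrRight fun _ : Fin n => Equiv.mulLeft₀ t htz) c i)
            * Polynomial.X ^ (i : ℕ))
        + Polynomial.C t * Polynomial.X ^ n
        = Polynomial.C t * monicOf Fq n c := by
      simp only [Equiv.piCongrRight_apply, Equiv.mulLeft₀_apply, monicOf, map_mul,
        Pi.map_apply]
      rw [mul_add, Finset.mul_sum]
      rw [add_comm]
      congr 1
      · exact Finset.sum_congr rfl fun i _ => by ring
    rw [this, mul_pow, ← Polynomial.C_pow, hk1 t htz, Polynomial.C_1, one_mul]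
  rw [Finset.sum_congr rfl fun t htmem => ht t (Finset.ne_of_mem_erase htmem)]
  rw [Finset.sum_const, Finset.card_erase_of_mem (Finset.mem_univ _), Finset.card_univ]
  have hcast : ((Fintype.card Fq - 1 : ℕ) : Polynomial Fq) = -1 := by
    have h2 : 1 ≤ Fintype.card Fq := Fintype.card_pos
    have hc : ((Fintype.card Fq : ℕ) : Polynomial Fq) = 0 := by
      rw [← map_natCast (Polynomial.C : Fq →+* Polynomial Fq), FiniteField.cast_card_eq_zero, map_zero]
    rw [Nat.cast_sub h2, hc, Nat.cast_one, zero_sub]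
  rw [nsmul_eq_mul, hcast, h0]
  ring


/-- Let `A = Fq[θ]` and fix `j ≥ 0`.  For all
`d > (q^j − 1)/(q − 1)` the power sum `∑_{a ∈ A_{+,d}} a^(q^j − 1)` vanishes;
moreover the total sum `∑_{d ≥ 0} ∑_{a ∈ A_{+,d}} a^(q^j − 1)` (a finite sum by the
first assertion, computed here as any sufficiently long partial sum) is `0` for
`j > 0` and `1` for `j = 0`. -/
theorem stmt_5 (Fq : Type) [Field Fq] [Fintype Fq] (q : ℕ) (hq : Fintype.card Fq = q)
    (j : ℕ) :
    (∀ d : ℕ, ((q ^ j - 1 : ℚ) / (q - 1 : ℚ) < (d : ℚ)) → powerSum Fq j d = 0) ∧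
    (∀ E : ℕ, ((q ^ j - 1 : ℚ) / (q - 1 : ℚ) < (E : ℚ)) →
      ∑ d ∈ Finset.range (E + 1), powerSum Fq j d =
        if j = 0 then 1 else 0) := by
  classical
  subst hq
  have h2 : 1 < Fintype.card Fq := Fintype.one_lt_card
  have hpos : (0 : ℚ) < (Fintype.card Fq : ℚ) - 1 := by
    have : (1 : ℚ) < (Fintype.card Fq : ℚ) := by exact_mod_cast h2
    linarith
  have h1 : ∀ j : ℕ, 1 ≤ Fintype.card Fq ^ j := fun j => Nat.one_le_pow _ _ (by omega)
  have hnat : ∀ d : ℕ, ((Fintype.card Fq ^ j - 1 : ℚ) / ((Fintype.card Fq : ℚ) - 1) < (d : ℚ))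
      → Fintype.card Fq ^ j - 1 < d * (Fintype.card Fq - 1) := by
    intro d hd
    rw [div_lt_iff₀ hpos] at hd
    have hc : ((Fintype.card Fq ^ j - 1 : ℕ) : ℚ) < ((d * (Fintype.card Fq - 1) : ℕ) : ℚ) := by
      push_cast [h1 j, h2.le]
      linarith
    exact_mod_cast hc
  have part1 : ∀ d : ℕ, ((Fintype.card Fq ^ j - 1 : ℚ) / ((Fintype.card Fq : ℚ) - 1) < (d : ℚ))
      → powerSum Fq j d = 0 := by
    intro d hd
    have := core_sum_zero Fq d (Fintype.card Fq ^ j - 1) (hnat d hd) (Polynomial.X ^ d)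
      (fun i => Polynomial.X ^ (i : ℕ))
    simpa [powerSum, monicOf] using this
  refine ⟨by exact_mod_cast part1, ?_⟩
  intro E hE
  have hE' : ((Fintype.card Fq ^ j - 1 : ℚ) / ((Fintype.card Fq : ℚ) - 1) < (E : ℚ)) := by
    exact_mod_cast hE
  by_cases hj : j = 0
  · subst hj
    simp only [if_pos rfl]
    have hzero : ∀ d ∈ Finset.range (E + 1), d ≠ 0 → powerSum Fq 0 d = 0 := by
      intro d _ hd0
      refine part1 d ?_
      have : (0 : ℚ) < (d : ℚ) := by exact_mod_cast Nat.pos_of_ne_zero hd0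
      simpa using this
    rw [Finset.sum_eq_single_of_mem 0 (Finset.mem_range.mpr (Nat.succ_pos E)) hzero]
    simp [powerSum, monicOf]
  · simp only [if_neg hj]
    set k := Fintype.card Fq ^ j - 1 with hk
    have hk0 : k ≠ 0 := by
      have : Fintype.card Fq ≤ Fintype.card Fq ^ j :=
        Nat.le_self_pow hj _
      omega
    have hk1 : ∀ t : Fq, t ≠ 0 → t ^ k = 1 := by
      intro t ht
      have hcp : t ^ (Fintype.card Fq ^ j) = t := FiniteField.pow_card_pow j t
      have hmul : t ^ k * t = t := by
        rw [← pow_succ, hk, Nat.sub_add_cancel (h1 j), hcp]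
      exact mul_right_cancel₀ ht (by rw [hmul, one_mul])
    have htel : ∀ n : ℕ, ∑ d ∈ Finset.range n, powerSum Fq j d
        = - ∑ c : Fin n → Fq,
            (∑ i : Fin n, Polynomial.C (c i) * Polynomial.X ^ (i : ℕ)) ^ k := by
      intro n
      induction n with
      | zero => simp [zero_pow hk0]
      | succ n ih =>
          have hps : powerSum Fq j n = ∑ c : Fin n → Fq, monicOf Fq n c ^ k := rfl
          rw [Finset.sum_range_succ, ih, step_lemma Fq k n hk1, hps]
          ring
    rw [htel (E + 1)]
    have hbound : k < (E + 1) * (Fintype.card Fq - 1) := by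
      have := hnat E hE'
      have h3 : E * (Fintype.card Fq - 1) ≤ (E + 1) * (Fintype.card Fq - 1) :=
        Nat.mul_le_mul_right _ (by omega)
      omega
    have hz := core_sum_zero Fq (E + 1) k hbound 0 (fun i => Polynomial.X ^ (i : ℕ))
    simp only [zero_add] at hz
    rw [hz, neg_zero]
end

section
/- Let A = F_q[θ] and s ≥ 1. For every integer k ≥ s/(q−1), the sum Σ_{a ∈ A_{+,k}} a(t_1)⋯a(t_{s−1}) vanishes in F_q[θ][t_1,…,t_{s−1}], where a(t_i) denotes the polynomial a with θ replaced by t_i. -/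
/-- Let `A = Fq[θ]` and `s ≥ 1`.  For every `k ≥ s/(q−1)`, the sum
`∑_{a ∈ A_{+,k}} a(t_1)⋯a(t_{s−1})` vanishes in `Fq[t_1,…,t_{s−1}]`, where `a(t_i)`
is the polynomial `a` evaluated at the variable `t_i`. -/
theorem stmt_6 (Fq : Type) [Field Fq] [Fintype Fq] (q : ℕ) (hq : Fintype.card Fq = q)
    (s : ℕ) (hs : 1 ≤ s) (k : ℕ) (hk : (s : ℚ) / (q - 1 : ℚ) ≤ (k : ℚ)) :
    ∑ c : Fin k → Fq, ∏ i : Fin (s - 1),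
        Polynomial.aeval (MvPolynomial.X i : MvPolynomial (Fin (s - 1)) Fq)
          (monicOf Fq k c) = 0 := by
  classical
  have hq2 : 1 < q := hq ▸ Fintype.one_lt_card
  have hsk : s ≤ k * (q - 1) := by
    have h2q : (2:ℚ) ≤ (q:ℚ) := by exact_mod_cast hq2
    rw [div_le_iff₀ (by linarith)] at hk
    have h : (s:ℚ) ≤ ((k * (q - 1) : ℕ) : ℚ) := by
      push_cast [Nat.cast_sub hq2.le]
      linarith
    exact_mod_cast h
  -- step 1: rewrite each factor as a sum over `Option (Fin k)`
  have step1 : ∀ (c : Fin k → Fq) (i : Fin (s-1)),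
      Polynomial.aeval (MvPolynomial.X i : MvPolynomial (Fin (s - 1)) Fq) (monicOf Fq k c)
        = ∑ o : Option (Fin k),
            MvPolynomial.C (o.elim 1 c) *
              (MvPolynomial.X i : MvPolynomial (Fin (s - 1)) Fq) ^ (o.elim k Fin.val) := by
    intro c i
    rw [Fintype.sum_option]
    simp [monicOf, MvPolynomial.algebraMap_eq]
  simp only [step1]
  -- step 2: expand the product and swap the two sums
  simp only [Finset.prod_univ_sum, Fintype.piFinset_univ]
  rw [Finset.sum_comm]
  -- step 3: each inner sum vanishes
  apply Finset.sum_eq_zero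
  intro f _
  -- pull out the coefficients
  have step3 : ∀ c : Fin k → Fq,
      (∏ i : Fin (s-1), MvPolynomial.C ((f i).elim 1 c) *
          (MvPolynomial.X i : MvPolynomial (Fin (s - 1)) Fq) ^ ((f i).elim k Fin.val))
        = MvPolynomial.C (∏ i : Fin (s-1), (f i).elim 1 c) *
            ∏ i : Fin (s-1),
              (MvPolynomial.X i : MvPolynomial (Fin (s - 1)) Fq) ^ ((f i).elim k Fin.val) := by
    intro c
    rw [Finset.prod_mul_distrib, map_prod]
  simp only [step3]
  rw [← Finset.sum_mul, ← map_sum]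
  -- it suffices to show the coefficient sum vanishes in Fq
  suffices h : (∑ c : Fin k → Fq, ∏ i : Fin (s-1), (f i).elim 1 c) = 0 by
    rw [h, map_zero, zero_mul]
  -- exponent of c j in the monomial
  set e : Fin k → ℕ := fun j => (Finset.univ.filter fun i => f i = some j).card with he
  -- rewrite the product in terms of the exponents
  have step4 : ∀ c : Fin k → Fq,
      (∏ i : Fin (s-1), (f i).elim 1 c) = ∏ j : Fin k, c j ^ e j := by
    intro c
    have := Finset.prod_fiberwise_of_maps_to (s := (Finset.univ : Finset (Fin (s-1)))) (g := f)
        (t := (Finset.univ : Finset (Option (Fin k))))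
        (fun i _ => Finset.mem_univ (f i)) (fun i => (f i).elim 1 c)
    rw [← this, Fintype.prod_option]
    have hnone : (∏ i ∈ Finset.univ.filter fun i => f i = none, (f i).elim 1 c) = 1 := by
      apply Finset.prod_eq_one
      intro i hi
      rw [Finset.mem_filter] at hi
      rw [hi.2]
      rfl
    rw [hnone, one_mul]
    apply Finset.prod_congr rfl
    intro j _
    rw [Finset.prod_congr rfl (fun i hi => ?_), Finset.prod_const]
    rw [Finset.mem_filter] at hi
    rw [hi.2]
    rfl
  simp only [step4]
  -- factor the sum over c as a product of one-variable sums
  have hfac : (∑ c : Fin k → Fq, ∏ j : Fin k, c j ^ e j)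
      = ∏ j : Fin k, ∑ x : Fq, x ^ e j := by
    rw [Finset.prod_univ_sum, Fintype.piFinset_univ]
  rw [hfac]
  -- find an exponent smaller than q - 1
  have hex : ∃ j : Fin k, e j < q - 1 := by
    by_contra hcon
    push_neg at hcon
    have h1 : k * (q - 1) ≤ ∑ j : Fin k, e j := by
      calc k * (q - 1) = ∑ _j : Fin k, (q - 1) := by
            simp [Finset.sum_const, mul_comm]
        _ ≤ ∑ j : Fin k, e j := Finset.sum_le_sum fun j _ => hcon j
    have h2 : (∑ j : Fin k, e j) ≤ s - 1 := by
      have hc := Finset.card_eq_sum_card_fiberwise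
        (f := f) (t := (Finset.univ : Finset (Option (Fin k))))
        (fun i (_ : i ∈ (Finset.univ : Finset (Fin (s-1)))) => Finset.mem_univ (f i))
      rw [Fintype.sum_option] at hc
      have : (∑ j : Fin k, e j) ≤ (Finset.univ : Finset (Fin (s-1))).card := by
        rw [hc]
        exact Nat.le_add_left _ _
      simpa using this
    omega
  obtain ⟨j0, hj0⟩ := hex
  apply Finset.prod_eq_zero (Finset.mem_univ j0)
  have := FiniteField.sum_pow_lt_card_sub_one (K := Fq) (e j0) (by rw [hq]; exact hj0)
  exact this
end
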